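/- Let η be a substitution and u ∈ A^ℤ a two-sided periodic point of η with growing seed u_{-1}|u_0 and period p. For every n ∈ ℤ \ {−1, 0}, if q is the u-quotient and r the u-remainder of n, then u_n = η^p(u_q)[r] (the r-th letter of η^p(u_q)) and rep_u(n) = rep_u(q) ⊙ tail_{η,p,u_q}(r). -/

import Mathlib

open Filter List

variable {A : Type*}

/-- A substitution applied to a word: concatenation of the images of its letters. -/
def substW (η : A → List A) (w : List A) : List A := (w.map η).flatten

/-- The `k`-th iterate of a substitution applied to a word. -/
def iterW (η : A → List A) (k : ℕ) (w : List A) : List A := (substW η)^[k] w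

/-- `η` is a substitution: nonempty images and at least one growing letter. -/
def IsSubstitution (η : A → List A) : Prop :=
  (∀ c, η c ≠ []) ∧ ∃ a, Tendsto (fun k => (iterW η k [a]).length) atTop atTop

/-- `(m i, a i)` for `i = 0, …, len-1` is an `x`-admissible sequence:
`m (i) ++ [a i]` is a prefix of `η (a (i+1))` and `m (len-1) ++ [a (len-1)]`
is a prefix of `η x`. -/
def AdmSeq (η : A → List A) (len : ℕ) (m : ℕ → List A) (a : ℕ → A) (x : A) : Prop :=
  (∀ i, i + 1 < len → (m i ++ [a i]) <+: η (a (i + 1))) ∧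
  (1 ≤ len → (m (len - 1) ++ [a (len - 1)]) <+: η x)

/-- `Σ_{j<k} |η^j(m_j)|`. -/
def sumLen (η : A → List A) (k : ℕ) (m : ℕ → List A) : ℕ :=
  ∑ j ∈ Finset.range k, (iterW η j (m j)).length

/-- `η^{k-1}(m_{k-1}) η^{k-2}(m_{k-2}) ⋯ η^0(m_0)`. -/
def concatDT (η : A → List A) (k : ℕ) (m : ℕ → List A) : List A :=
  ((List.range k).reverse.map (fun j => iterW η j (m j))).flatten

/-- The digit word `|m_{k-1}| ⊙ |m_{k-2}| ⊙ ⋯ ⊙ |m_0|`. -/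
def dtDigits (k : ℕ) (m : ℕ → List A) : List ℕ :=
  (List.range k).reverse.map (fun j => (m j).length)

/-- Partial run of the automaton `A_{η,x}`: from state `x`, the digit `d`
moves to the `d`-th letter of `η x` when `d < |η x|`. -/
def run (η : A → List A) : List ℕ → A → Option A
  | [], x => some x
  | d :: w, x => if h : d < (η x).length then run η w ((η x)[d]) else none

/-- `u` restricted to nonnegative positions is a periodic point of `η` of period `p`:
every `η^p`-image of a prefix of `u` is again a prefix of `u`. -/
def RightPer (η : A → List A) (p : ℕ) (u : ℤ → A) : Prop :=
  ∀ n : ℕ, ∀ j : ℕ, j < (iterW η p (List.ofFn (fun i : Fin (n+1) => u i))).length →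
    (iterW η p (List.ofFn (fun i : Fin (n+1) => u i)))[j]? = some (u j)

/-- `u` restricted to negative positions is a periodic point of `η` of period `p`:
every `η^p`-image of a suffix `u_{-(n+1)} ⋯ u_{-1}` of the left part is again a
suffix of the left part of `u`. -/
def LeftPer (η : A → List A) (p : ℕ) (u : ℤ → A) : Prop :=
  ∀ n : ℕ, ∀ j : ℕ,
    j < (iterW η p (List.ofFn (fun i : Fin (n+1) => u ((i : ℤ) - (n+1))))).length →
    (iterW η p (List.ofFn (fun i : Fin (n+1) => u ((i : ℤ) - (n+1)))))[j]? =
      some (u ((j : ℤ) -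
        (iterW η p (List.ofFn (fun i : Fin (n+1) => u ((i : ℤ) - (n+1))))).length))

/-- `u : ℤ → A` is a two-sided periodic point of `η` of period `p ≥ 1` with
growing seed `u₋₁ | u₀`. -/
def TwoSidedPerPoint (η : A → List A) (p : ℕ) (u : ℤ → A) : Prop :=
  1 ≤ p ∧ RightPer η p u ∧ LeftPer η p u ∧
  Tendsto (fun k => (iterW η k [u 0]).length) atTop atTop ∧
  Tendsto (fun k => (iterW η k [u (-1)]).length) atTop atTop

/-- The Dumont–Thomas decomposition data of a positive integer `n` with respect to
the letter `x` (Theorem of Dumont–Thomas for the right-infinite part):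
`p ∣ k`, `p ≤ k`, the sequence is `x`-admissible, `m_{k-1} ⋯ m_{k-p} ≠ ε` and
`Σ_{j<k} |η^j(m_j)| = n`. -/
def PosSpec (η : A → List A) (p : ℕ) (x : A) (n : ℤ) (k : ℕ) (m : ℕ → List A)
    (a : ℕ → A) : Prop :=
  p ∣ k ∧ p ≤ k ∧ AdmSeq η k m a x ∧ (∃ i, i < p ∧ m (k - 1 - i) ≠ []) ∧
  (sumLen η k m : ℤ) = n

/-- The Dumont–Thomas decomposition data of an integer `n ≤ -2` with respect to
the letter `b` (Theorem of Dumont–Thomas for the left-infinite part). -/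
def NegSpec (η : A → List A) (p : ℕ) (b : A) (n : ℤ) (k : ℕ) (m : ℕ → List A)
    (a : ℕ → A) : Prop :=
  p ∣ k ∧ p ≤ k ∧ AdmSeq η k m a b ∧
  ((List.range p).map (fun i => iterW η (p - 1 - i) (m (k - 1 - i)))).flatten
      ++ [a (k - p)] ≠ iterW η p [b] ∧
  (sumLen η k m : ℤ) = n + (iterW η k [b]).length

/-- `w` is the Dumont–Thomas complement representation `rep_u(n)` of `n ∈ ℤ`. -/
def RepSpec (η : A → List A) (p : ℕ) (u : ℤ → A) (n : ℤ) (w : List ℕ) : Prop :=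
  (n = 0 ∧ w = [0]) ∨ (n = -1 ∧ w = [1]) ∨
  (1 ≤ n ∧ ∃ k m a, PosSpec η p (u 0) n k m a ∧ w = 0 :: dtDigits k m) ∨
  (n ≤ -2 ∧ ∃ k m a, NegSpec η p (u (-1)) n k m a ∧ w = 1 :: dtDigits k m)

/-- Run of the automaton `A_{η,s}` with initial state `start`: the first digit
`0` (resp. `1`) moves to `u 0` (resp. `u (-1)`). -/
def runSeed (η : A → List A) (u : ℤ → A) : List ℕ → Option A
  | [] => none
  | d :: w => if d = 0 then run η w (u 0) else if d = 1 then run η w (u (-1)) else none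

/-- `|η^{k-p-1}(m_{k-1}) ⋯ η^0(m_p)|`, the `u`-quotient of a positive integer. -/
def uQuotPos (η : A → List A) (p k : ℕ) (m : ℕ → List A) : ℤ :=
  ∑ j ∈ Finset.range (k - p), ((iterW η j (m (j + p))).length : ℤ)

/-- `w = tail_{η,p,x}(n)`: the digit word of the unique `x`-admissible sequence of
length `p` whose length-sum is `n`. -/
def TailSpec (η : A → List A) (p : ℕ) (x : A) (n : ℕ) (w : List ℕ) : Prop :=
  ∃ m a, AdmSeq η p m a x ∧ sumLen η p m = n ∧ w = dtDigits p m

/-- Radix order: shorter words first, ties broken lexicographically. -/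
def radLt (v w : List ℕ) : Prop :=
  v.length < w.length ∨ (v.length = w.length ∧ List.Lex (· < ·) v w)

/-- Reversed-radix order: longer words first, ties broken lexicographically. -/
def revLt (v w : List ℕ) : Prop :=
  w.length < v.length ∨ (v.length = w.length ∧ List.Lex (· < ·) v w)

/-- The total order `≺` on `{0,1}D*`. -/
def precLt (v w : List ℕ) : Prop :=
  (v.head? = some 1 ∧ w.head? = some 0) ∨
  (v.head? = some 0 ∧ w.head? = some 0 ∧ radLt v w) ∨
  (v.head? = some 1 ∧ w.head? = some 1 ∧ revLt v w)

/-- The base-2 value `Σ_{i<k} w_i 2^i` of the word `w = w_{k-1} ⋯ w_0`. -/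
def natVal2 (w : List ℕ) : ℕ := w.foldl (fun acc d => 2 * acc + d) 0

/-- The two's complement value `Σ_{i<k} w_i 2^i − w_{k-1} 2^k`. -/
def val2c (w : List ℕ) : ℤ := (natVal2 w : ℤ) - (w.headI : ℤ) * 2 ^ w.length

/-- Fibonacci numbers with `F 0 = 1`, `F 1 = 2`. -/
def fib2 : ℕ → ℕ
  | 0 => 1
  | 1 => 2
  | n + 2 => fib2 (n + 1) + fib2 n

/-- The Fibonacci complement value `Σ_{i<k} w_i F_i − w_{k-1} F_k`
of the word `w = w_{k-1} ⋯ w_0`. -/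
def valFc (w : List ℕ) : ℤ :=
  (∑ i ∈ Finset.range w.length, (w.reverse.getD i 0 : ℤ) * fib2 i) -
    (w.headI : ℤ) * fib2 w.length

/-!
Write `k = p + d`. Because `p ∣ d` and `η^p` maps `u_0 ⋯ u_{L-1}` (resp. `u_{-L} ⋯ u_{-1}`) onto a
word of the same shape, the top `d` levels `η^{d-1}(m_{k-1}) ⋯ η^0(m_p)` of the
Dumont–Thomas decomposition of `n` spell the prefix `u_0 ⋯ u_{q-1}` of `η^d(u_0)` (resp. the part
of `η^d(u_{-1})` in front of the suffix `u_q ⋯ u_{-1}`), and the next letter is `a_p = u_q`. Hence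
the bottom `p` levels form a `u_q`-admissible sequence, which yields `u_n = a_0 = η^p(u_q)[r]`.
Conversely, the decomposition of `q` describes the same prefix (resp. suffix) of `u`, so putting
the bottom `p` levels of `n` under it gives an admissible sequence whose length sum is again `n`:
that is `rep_u(n) = rep_u(q) ⊙ tail(r)`.
-/

theorem List.map_reverse_range {β : Type*} (p : ℕ) (f : ℕ → β) :
    (range p).reverse.map f = (range p).map fun i => f (p - 1 - i) := by
  rw [range_eq_range', reverse_range', map_map, ← range_eq_range']
  simp [Function.comp_def]

section Substitution

variable {η : A → List A}

theorem substW_append (v w : List A) : substW η (v ++ w) = substW η v ++ substW η w := by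
  simp [substW]

theorem iterW_append (k : ℕ) (v w : List A) :
    iterW η k (v ++ w) = iterW η k v ++ iterW η k w := by
  induction k generalizing v w with
  | zero => rfl
  | succ k ih => simp only [iterW, Function.iterate_succ_apply, substW_append]; exact ih _ _

@[simp]
theorem iterW_nil (k : ℕ) : iterW η k ([] : List A) = [] := by
  simpa using iterW_append (η := η) k [] []

theorem iterW_add (j k : ℕ) (w : List A) : iterW η (j + k) w = iterW η j (iterW η k w) :=
  Function.iterate_add_apply _ _ _ _

theorem iterW_succ_singleton (k : ℕ) (x : A) : iterW η (k + 1) [x] = iterW η k (η x) := by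
  simp [iterW, Function.iterate_succ_apply, substW]

theorem List.IsPrefix.iterW {v w : List A} (h : v <+: w) (k : ℕ) :
    iterW η k v <+: iterW η k w := by
  obtain ⟨t, rfl⟩ := h
  rw [iterW_append]
  exact prefix_append _ _

theorem concatDT_succ (k : ℕ) (m : ℕ → List A) :
    concatDT η (k + 1) m = iterW η k (m k) ++ concatDT η k m := by
  simp [concatDT, List.range_succ]

theorem length_concatDT (k : ℕ) (m : ℕ → List A) : (concatDT η k m).length = sumLen η k m := by
  induction k with
  | zero => rfl
  | succ k ih =>
    rw [concatDT_succ, length_append, ih, sumLen, sumLen, Finset.sum_range_succ, add_comm]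

theorem length_iterW_concatDT (p k : ℕ) (m : ℕ → List A) :
    (iterW η p (concatDT η k m)).length = ∑ j ∈ Finset.range k, (iterW η (p + j) (m j)).length := by
  induction k with
  | zero => simp [concatDT]
  | succ k ih =>
    rw [concatDT_succ, iterW_append, length_append, ih, Finset.sum_range_succ, ← iterW_add,
      add_comm]

theorem flatten_map_range_eq_concatDT (p : ℕ) (m : ℕ → List A) :
    ((List.range p).map fun i => iterW η (p - 1 - i) (m (p - 1 - i))).flatten = concatDT η p m := by
  rw [concatDT, List.map_reverse_range]

end Substitution

def glue {α : Type*} (p : ℕ) (f g : ℕ → α) (j : ℕ) : α := if j < p then f j else g (j - p)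

section Glue

variable {α : Type*} {p j : ℕ} {f g : ℕ → α}

theorem glue_of_lt (h : j < p) : glue p f g j = f j := if_pos h

theorem glue_of_le (h : p ≤ j) : glue p f g j = g (j - p) := if_neg (Nat.not_lt.2 h)

theorem glue_shift : glue p f (fun j => f (j + p)) = f := by
  funext j
  unfold glue
  split_ifs with h
  · rfl
  · exact congrArg f (Nat.sub_add_cancel (Nat.not_lt.1 h))

theorem dtDigits_glue (k : ℕ) (m m' : ℕ → List A) :
    dtDigits (p + k) (glue p m m') = dtDigits k m' ++ dtDigits p m := by
  rw [dtDigits, dtDigits, dtDigits, List.range_add, List.reverse_append, List.map_append,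
    List.map_reverse, List.map_map, ← List.map_reverse]
  congr 1 <;> refine List.map_congr_left fun i hi => ?_
  · simp [glue_of_le]
  · rw [glue_of_lt (List.mem_range.1 (List.mem_reverse.1 hi))]

theorem sumLen_glue (η : A → List A) (k : ℕ) (m m' : ℕ → List A) :
    sumLen η (p + k) (glue p m m') = sumLen η p m + (iterW η p (concatDT η k m')).length := by
  rw [sumLen, Finset.sum_range_add, length_iterW_concatDT]
  congr 1
  · exact Finset.sum_congr rfl fun i hi => by rw [glue_of_lt (Finset.mem_range.1 hi)]
  · exact Finset.sum_congr rfl fun i _ => by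
      rw [glue_of_le (Nat.le_add_right p i), Nat.add_sub_cancel_left]

theorem sumLen_add (η : A → List A) (d : ℕ) (m : ℕ → List A) :
    sumLen η (p + d) m = sumLen η p m + (iterW η p (concatDT η d fun j => m (j + p))).length := by
  rw [← sumLen_glue, glue_shift]

end Glue

namespace AdmSeq

variable {η : A → List A} {p d k : ℕ} {m m' : ℕ → List A} {a a' : ℕ → A} {x y : A}

theorem restrict (h : AdmSeq η (p + d) m a x) (hd : 1 ≤ d) : AdmSeq η p m a (a p) := by
  refine ⟨fun i hi => h.1 i (by omega), fun hp => ?_⟩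
  simpa [Nat.sub_add_cancel hp] using h.1 (p - 1) (by omega)

theorem shift (h : AdmSeq η (p + d) m a x) :
    AdmSeq η d (fun j => m (j + p)) (fun j => a (j + p)) x := by
  refine ⟨fun i hi => ?_, fun hd => ?_⟩
  · simpa [Nat.add_right_comm] using h.1 (i + p) (by omega)
  · simpa [show p + d - 1 = d - 1 + p by omega] using h.2 (by omega)

theorem glue (h : AdmSeq η p m a y) (h' : AdmSeq η k m' a' x) (hy : y = a' 0) (hk : 1 ≤ k) :
    AdmSeq η (p + k) (glue p m m') (glue p a a') x := by
  refine ⟨fun i hi => ?_, fun _ => ?_⟩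
  · rcases Nat.lt_trichotomy (i + 1) p with hip | hip | hip
    · rw [glue_of_lt (by omega), glue_of_lt (by omega), glue_of_lt hip]
      exact h.1 i hip
    · rw [glue_of_lt (by omega), glue_of_lt (by omega), glue_of_le hip.ge, hip, Nat.sub_self,
        ← hy, show i = p - 1 by omega]
      exact h.2 (by omega)
    · rw [glue_of_le (by omega), glue_of_le (by omega), glue_of_le (by omega),
        show i + 1 - p = i - p + 1 by omega]
      exact h'.1 (i - p) (by omega)
  · rw [glue_of_le (by omega), glue_of_le (by omega), show p + k - 1 - p = k - 1 by omega]
    exact h'.2 hk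

theorem concatDT_append_prefix (h : AdmSeq η k m a x) (hk : 1 ≤ k) :
    concatDT η k m ++ [a 0] <+: iterW η k [x] := by
  obtain ⟨j, rfl⟩ := Nat.exists_eq_add_of_le' hk
  induction j generalizing x with
  | zero => simpa [concatDT, iterW, substW] using h.2 le_rfl
  | succ j ih =>
    have htop : iterW η (j + 1) (m (j + 1) ++ [a (j + 1)]) <+: iterW η (j + 1) (η x) :=
      (h.2 (by omega)).iterW (j + 1)
    rw [iterW_append] at htop
    rw [concatDT_succ, List.append_assoc, iterW_succ_singleton]
    exact ((prefix_append_right_inj _).2 (ih (h.restrict le_rfl) (by omega))).trans htop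

theorem concatDT_prefix (h : AdmSeq η k m a x) : concatDT η k m <+: iterW η k [x] := by
  rcases Nat.eq_zero_or_pos k with rfl | hk
  · exact nil_prefix
  · exact (prefix_append _ _).trans (h.concatDT_append_prefix hk)

theorem sumLen_lt (h : AdmSeq η k m a x) : sumLen η k m < (iterW η k [x]).length := by
  rcases Nat.eq_zero_or_pos k with rfl | hk
  · simp [sumLen, iterW]
  · simpa [length_concatDT] using (h.concatDT_append_prefix hk).length_le

theorem getElem?_iterW_sumLen (h : AdmSeq η k m a x) (hk : 1 ≤ k) :
    (iterW η k [x])[sumLen η k m]? = some (a 0) := by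
  obtain ⟨t, ht⟩ := h.concatDT_append_prefix hk
  rw [← ht, getElem?_append_left (by simp [length_concatDT]), ← length_concatDT,
    getElem?_concat_length]

end AdmSeq

def rightWord (u : ℤ → A) (L : ℕ) : List A := List.ofFn fun i : Fin L => u i

def leftWord (u : ℤ → A) (L : ℕ) : List A := List.ofFn fun i : Fin L => u (i - L)

section Words

variable {u : ℤ → A} {v w : List A} {L : ℕ}

theorem getElem?_rightWord {j : ℕ} (hj : j < L) : (rightWord u L)[j]? = some (u j) := by
  simp [rightWord, hj]

theorem getElem?_leftWord {j : ℕ} (hj : j < L) : (leftWord u L)[j]? = some (u (j - L)) := by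
  simp [leftWord, hj]

theorem eq_rightWord_of_getElem? (hw : ∀ j < w.length, w[j]? = some (u j)) :
    w = rightWord u w.length :=
  ext_getElem? fun j => by
    by_cases hj : j < w.length
    · rw [hw j hj, getElem?_rightWord hj]
    · simp [rightWord, hj]

theorem eq_leftWord_of_getElem? (hw : ∀ j < w.length, w[j]? = some (u (j - w.length))) :
    w = leftWord u w.length :=
  ext_getElem? fun j => by
    by_cases hj : j < w.length
    · rw [hw j hj, getElem?_leftWord hj]
    · simp [leftWord, hj]

theorem List.IsPrefix.eq_rightWord (h : w <+: rightWord u L) : w = rightWord u w.length :=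
  eq_rightWord_of_getElem? fun j hj => by
    rw [getElem?_eq_getElem hj, ← prefix_iff_getElem?.1 h j hj, getElem?_rightWord]
    simpa [rightWord] using h.length_le.trans_lt' hj

theorem eq_leftWord_of_append_eq (h : v ++ w = leftWord u L) : w = leftWord u w.length :=
  eq_leftWord_of_getElem? fun j hj => by
    have hL : L = v.length + w.length := by simpa [leftWord] using (congrArg length h).symm
    have hvj := getElem?_append_right (l₁ := v) (l₂ := w) (i := v.length + j) (by omega)
    rw [Nat.add_sub_cancel_left, h, getElem?_leftWord (by omega)] at hvj
    rw [← hvj, hL]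
    congr 2
    push_cast
    ring

end Words

namespace RightPer

variable {η : A → List A} {p K : ℕ} {u : ℤ → A} {m : ℕ → List A} {a : ℕ → A}

theorem iterW_rightWord (hR : RightPer η p u) (L : ℕ) :
    iterW η p (rightWord u L) = rightWord u (iterW η p (rightWord u L)).length := by
  cases L with
  | zero => simp [rightWord]
  | succ n => exact eq_rightWord_of_getElem? (hR n)

theorem iterW_of_dvd (hR : RightPer η p u) (hK : p ∣ K) :
    iterW η K [u 0] = rightWord u (iterW η K [u 0]).length := by
  obtain ⟨t, rfl⟩ := hK
  induction t with
  | zero => simp [rightWord, iterW]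
  | succ t ih =>
    rw [show p * (t + 1) = p + p * t by ring, iterW_add, ih]
    exact hR.iterW_rightWord _

theorem concatDT_eq (hR : RightPer η p u) (hK : p ∣ K) (h : AdmSeq η K m a (u 0)) :
    concatDT η K m = rightWord u (sumLen η K m) := by
  have hpre := h.concatDT_prefix
  rw [hR.iterW_of_dvd hK] at hpre
  rw [hpre.eq_rightWord, length_concatDT]

theorem apply_sumLen (hR : RightPer η p u) (hK : p ∣ K) (h : AdmSeq η K m a (u 0))
    (hK1 : 1 ≤ K) : u (sumLen η K m) = a 0 := by
  have hget := h.getElem?_iterW_sumLen hK1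
  rw [hR.iterW_of_dvd hK, getElem?_rightWord (h.sumLen_lt)] at hget
  exact Option.some.inj hget

end RightPer

namespace LeftPer

variable {η : A → List A} {p K : ℕ} {u : ℤ → A} {m : ℕ → List A} {a : ℕ → A}

theorem iterW_leftWord (hL : LeftPer η p u) (L : ℕ) :
    iterW η p (leftWord u L) = leftWord u (iterW η p (leftWord u L)).length := by
  cases L with
  | zero => simp [leftWord]
  | succ n =>
    have hw : leftWord u (n + 1) = List.ofFn fun i : Fin (n + 1) => u ((i : ℤ) - (n + 1)) := by
      simp [leftWord]
    rw [hw]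
    exact eq_leftWord_of_getElem? (hL n)

theorem iterW_of_dvd (hL : LeftPer η p u) (hK : p ∣ K) :
    iterW η K [u (-1)] = leftWord u (iterW η K [u (-1)]).length := by
  obtain ⟨t, rfl⟩ := hK
  induction t with
  | zero => simp [leftWord, iterW]
  | succ t ih =>
    rw [show p * (t + 1) = p + p * t by ring, iterW_add, ih]
    exact hL.iterW_leftWord _

theorem concatDT_append_leftWord (hL : LeftPer η p u) (hK : p ∣ K)
    (h : AdmSeq η K m a (u (-1))) :
    concatDT η K m ++ leftWord u ((iterW η K [u (-1)]).length - sumLen η K m) =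
      iterW η K [u (-1)] := by
  obtain ⟨D, hD⟩ := h.concatDT_prefix
  have hlen : D.length = (iterW η K [u (-1)]).length - sumLen η K m := by
    rw [← hD, length_append, length_concatDT]
    omega
  rw [← hlen, ← eq_leftWord_of_append_eq (hD.trans (hL.iterW_of_dvd hK)), hD]

theorem apply_sumLen_sub (hL : LeftPer η p u) (hK : p ∣ K) (h : AdmSeq η K m a (u (-1)))
    (hK1 : 1 ≤ K) : u (sumLen η K m - (iterW η K [u (-1)]).length) = a 0 := by
  have hget := h.getElem?_iterW_sumLen hK1
  rw [hL.iterW_of_dvd hK, getElem?_leftWord (h.sumLen_lt)] at hget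
  exact Option.some.inj hget

end LeftPer

theorem exists_ne_nil_of_sumLen_pos {η : A → List A} {p : ℕ} {m : ℕ → List A}
    (h : 0 < sumLen η p m) : ∃ i < p, m (p - 1 - i) ≠ [] := by
  by_contra! hnil
  refine h.ne' (Finset.sum_eq_zero fun j hj => ?_)
  have hj : j < p := Finset.mem_range.1 hj
  have := hnil (p - 1 - j) (by omega)
  rw [show p - 1 - (p - 1 - j) = j by omega] at this
  simp [this]

namespace PosSpec

variable {η : A → List A} {p d k : ℕ} {u : ℤ → A} {n : ℤ} {m m' : ℕ → List A} {a a' : ℕ → A}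

theorem admSeq_quot (h : PosSpec η p (u 0) n (p + d) m a) (hR : RightPer η p u) :
    AdmSeq η p m a (u (sumLen η d fun j => m (j + p))) := by
  obtain ⟨hdvd, -, hadm, -, -⟩ := h
  rcases Nat.eq_zero_or_pos d with rfl | hd
  · simpa [sumLen] using hadm
  · rw [hR.apply_sumLen ((Nat.dvd_add_right dvd_rfl).1 hdvd) hadm.shift hd]
    simpa using hadm.restrict hd

theorem apply_eq (h : PosSpec η p (u 0) n k m a) (hR : RightPer η p u) (hp : 1 ≤ p) :
    u n = a 0 := by
  obtain ⟨hdvd, hpk, hadm, -, rfl⟩ := h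
  exact hR.apply_sumLen hdvd hadm (by omega)

theorem eq_sumLen_add (h : PosSpec η p (u 0) n (p + d) m a) (hR : RightPer η p u) :
    n = sumLen η p m + (iterW η p (rightWord u (sumLen η d fun j => m (j + p)))).length := by
  obtain ⟨hdvd, -, hadm, -, rfl⟩ := h
  rw [sumLen_add, hR.concatDT_eq ((Nat.dvd_add_right dvd_rfl).1 hdvd) hadm.shift]
  push_cast
  rfl

theorem of_admSeq {x : A} (h : AdmSeq η p m a x) (hn : n = sumLen η p m) (hn1 : 1 ≤ n) :
    PosSpec η p x n p m a :=
  ⟨dvd_rfl, le_rfl, h, exists_ne_nil_of_sumLen_pos (η := η) (by omega), hn.symm⟩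

theorem glue {q : ℕ} (h' : PosSpec η p (u 0) q k m' a') (hR : RightPer η p u) (hp : 1 ≤ p)
    (h : AdmSeq η p m a (u q)) (hn : n = sumLen η p m + (iterW η p (rightWord u q)).length) :
    PosSpec η p (u 0) n (p + k) (glue p m m') (glue p a a') := by
  obtain ⟨hdvd, hpk, hadm, ⟨i, hi, hne⟩, hsum⟩ := h'
  have hq : sumLen η k m' = q := by exact_mod_cast hsum
  refine ⟨dvd_add dvd_rfl hdvd, by omega, h.glue hadm ?_ (by omega), ⟨i, hi, ?_⟩, ?_⟩
  · rw [← hR.apply_sumLen hdvd hadm (by omega), hq]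
  · rwa [glue_of_le (by omega), show p + k - 1 - i - p = k - 1 - i by omega]
  · rw [sumLen_glue, hR.concatDT_eq hdvd hadm, hq, hn]
    push_cast
    rfl

theorem repSpec_append (h : PosSpec η p (u 0) n (p + d) m a) (hR : RightPer η p u)
    (hp : 1 ≤ p) (hn : 1 ≤ n) {wq : List ℕ}
    (hq : RepSpec η p u (sumLen η d fun j => m (j + p)) wq) :
    RepSpec η p u n (wq ++ dtDigits p m) := by
  have hlow := h.admSeq_quot hR
  have hsum := h.eq_sumLen_add hR
  rcases hq with ⟨hq0, rfl⟩ | ⟨hq1, -⟩ | ⟨-, k', m', a', h', rfl⟩ | ⟨hq2, -⟩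
  · rw [show (sumLen η d fun j => m (j + p)) = 0 by exact_mod_cast hq0] at hlow hsum
    simp only [rightWord, List.ofFn_zero, iterW_nil, length_nil, Nat.cast_zero, add_zero] at hsum
    exact Or.inr (Or.inr (Or.inl ⟨hn, p, m, a, of_admSeq hlow hsum hn, rfl⟩))
  · omega
  · refine Or.inr (Or.inr (Or.inl ⟨hn, p + k', _, _, h'.glue hR hp hlow hsum, ?_⟩))
    rw [dtDigits_glue]
    rfl
  · omega

end PosSpec

namespace NegSpec

variable {η : A → List A} {p d k : ℕ} {u : ℤ → A} {n : ℤ} {m m' : ℕ → List A} {a a' : ℕ → A}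

theorem admSeq_quot (h : NegSpec η p (u (-1)) n (p + d) m a) (hL : LeftPer η p u) :
    AdmSeq η p m a (u ((sumLen η d fun j => m (j + p)) - (iterW η d [u (-1)]).length)) := by
  obtain ⟨hdvd, -, hadm, -, -⟩ := h
  rcases Nat.eq_zero_or_pos d with rfl | hd
  · simpa [sumLen, iterW] using hadm
  · rw [hL.apply_sumLen_sub ((Nat.dvd_add_right dvd_rfl).1 hdvd) hadm.shift hd]
    simpa using hadm.restrict hd

theorem apply_eq (h : NegSpec η p (u (-1)) n k m a) (hL : LeftPer η p u) (hp : 1 ≤ p) :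
    u n = a 0 := by
  obtain ⟨hdvd, hpk, hadm, -, hsum⟩ := h
  rw [← hL.apply_sumLen_sub hdvd hadm (by omega), hsum, add_sub_cancel_right]

theorem eq_sumLen_sub (h : NegSpec η p (u (-1)) n (p + d) m a) (hL : LeftPer η p u) :
    n = sumLen η p m - (iterW η p (leftWord u
      ((iterW η d [u (-1)]).length - sumLen η d fun j => m (j + p)))).length := by
  obtain ⟨hdvd, -, hadm, -, hsum⟩ := h
  have hlen := congrArg (fun w => (iterW η p w).length)
    (hL.concatDT_append_leftWord ((Nat.dvd_add_right dvd_rfl).1 hdvd) hadm.shift)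
  simp only [iterW_append, length_append, ← iterW_add] at hlen
  rw [sumLen_add] at hsum
  omega

theorem of_admSeq {x : A} (h : AdmSeq η p m a x) (hn : n = sumLen η p m - (iterW η p [x]).length)
    (hn2 : n ≤ -2) : NegSpec η p x n p m a := by
  refine ⟨dvd_rfl, le_rfl, h, fun hfull => ?_, by omega⟩
  rw [flatten_map_range_eq_concatDT] at hfull
  have hlen := congrArg length hfull
  simp only [length_append, length_concatDT, length_singleton] at hlen
  omega

theorem glue {e : ℕ} (h' : NegSpec η p (u (-1)) (-e) k m' a') (hL : LeftPer η p u)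
    (hp : 1 ≤ p) (h : AdmSeq η p m a (u (-e)))
    (hn : n = sumLen η p m - (iterW η p (leftWord u e)).length) :
    NegSpec η p (u (-1)) n (p + k) (glue p m m') (glue p a a') := by
  obtain ⟨hdvd, hpk, hadm, hfull, hsum⟩ := h'
  have hsplit := hL.concatDT_append_leftWord hdvd hadm
  have hlt := hadm.sumLen_lt
  rw [show (iterW η k [u (-1)]).length - sumLen η k m' = e by omega] at hsplit
  refine ⟨dvd_add dvd_rfl hdvd, by omega, h.glue hadm ?_ (by omega), ?_, ?_⟩
  · rw [← hL.apply_sumLen_sub hdvd hadm (by omega), hsum, add_sub_cancel_right]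
  · have hm : ∀ i ∈ List.range p, iterW η (p - 1 - i) (_root_.glue p m m' (p + k - 1 - i)) =
        iterW η (p - 1 - i) (m' (k - 1 - i)) := fun i hi => by
      rw [glue_of_le (by simp at hi; omega), show p + k - 1 - i - p = k - 1 - i by omega]
    rwa [List.map_congr_left hm, glue_of_le (by omega), show p + k - p - p = k - p by omega]
  · have hlen := congrArg (fun w => (iterW η p w).length) hsplit
    simp only [iterW_append, length_append, ← iterW_add] at hlen
    rw [sumLen_glue]
    push_cast
    omega

theorem repSpec_append (h : NegSpec η p (u (-1)) n (p + d) m a) (hL : LeftPer η p u)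
    (hp : 1 ≤ p) (hn : n ≤ -2) {wq : List ℕ}
    (hq : RepSpec η p u ((sumLen η d fun j => m (j + p)) - (iterW η d [u (-1)]).length) wq) :
    RepSpec η p u n (wq ++ dtDigits p m) := by
  have hlow := h.admSeq_quot hL
  have hsum := h.eq_sumLen_sub hL
  have hlt := h.2.2.1.shift.sumLen_lt
  rcases hq with ⟨hq0, -⟩ | ⟨hq1, rfl⟩ | ⟨hq1, -⟩ | ⟨-, k', m', a', h', rfl⟩
  · omega
  · rw [hq1] at hlow
    rw [show (iterW η d [u (-1)]).length - (sumLen η d fun j => m (j + p)) = 1 by omega] at hsum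
    exact Or.inr (Or.inr (Or.inr ⟨hn, p, m, a, of_admSeq hlow hsum hn, rfl⟩))
  · omega
  · have he : ((sumLen η d fun j => m (j + p)) - (iterW η d [u (-1)]).length : ℤ) =
        -↑((iterW η d [u (-1)]).length - sumLen η d fun j => m (j + p)) := by omega
    rw [he] at hlow h'
    refine Or.inr (Or.inr (Or.inr ⟨hn, p + k', _, _, h'.glue hL hp hlow hsum, ?_⟩))
    rw [dtDigits_glue]
    rfl

end NegSpec

theorem uQuotPos_eq (η : A → List A) (p k : ℕ) (m : ℕ → List A) :
    uQuotPos η p k m = sumLen η (k - p) fun j => m (j + p) := by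
  simp [uQuotPos, sumLen]

theorem rep_recurrence_general (η : A → List A) (p : ℕ) (u : ℤ → A) (hu : TwoSidedPerPoint η p u) (n : ℤ) :
    (∀ (k : ℕ) (m : ℕ → List A) (a : ℕ → A), 1 ≤ n →
      PosSpec η p (u 0) n k m a →
      (iterW η p [u (uQuotPos η p k m)])[sumLen η p m]? = some (u n) ∧
      ∀ wq : List ℕ, RepSpec η p u (uQuotPos η p k m) wq →
        RepSpec η p u n (wq ++ dtDigits p m)) ∧
    (∀ (k : ℕ) (m : ℕ → List A) (a : ℕ → A), n ≤ -2 →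
      NegSpec η p (u (-1)) n k m a →
      (iterW η p [u (uQuotPos η p k m - (iterW η (k - p) [u (-1)]).length)])[sumLen η p m]?
          = some (u n) ∧
      ∀ wq : List ℕ,
        RepSpec η p u (uQuotPos η p k m - (iterW η (k - p) [u (-1)]).length) wq →
        RepSpec η p u n (wq ++ dtDigits p m)) := by
  obtain ⟨hp, hR, hL, -, -⟩ := hu
  refine ⟨fun k m a hn h => ?_, fun k m a hn h => ?_⟩
  · obtain ⟨d, rfl⟩ := Nat.exists_eq_add_of_le h.2.1
    rw [uQuotPos_eq, Nat.add_sub_cancel_left, h.apply_eq hR hp]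
    exact ⟨(h.admSeq_quot hR).getElem?_iterW_sumLen hp, fun _ => h.repSpec_append hR hp hn⟩
  · obtain ⟨d, rfl⟩ := Nat.exists_eq_add_of_le h.2.1
    rw [uQuotPos_eq, Nat.add_sub_cancel_left, h.apply_eq hL hp]
    exact ⟨(h.admSeq_quot hL).getElem?_iterW_sumLen hp, fun _ => h.repSpec_append hL hp hn⟩

/-- Lemma on quotient and remainder. For `n ∈ ℤ \ {-1,0}`
with `u`-quotient `q` and `u`-remainder `r`, one has `u_n = η^p(u_q)[r]` and
`rep_u(n) = rep_u(q) ⊙ tail_{η,p,u_q}(r)`. -/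
theorem rep_recurrence [Finite A] (η : A → List A) (hη : IsSubstitution η)
    (p : ℕ) (u : ℤ → A) (hu : TwoSidedPerPoint η p u) (n : ℤ) :
    (∀ (k : ℕ) (m : ℕ → List A) (a : ℕ → A), 1 ≤ n →
      PosSpec η p (u 0) n k m a →
      (iterW η p [u (uQuotPos η p k m)])[sumLen η p m]? = some (u n) ∧
      ∀ wq : List ℕ, RepSpec η p u (uQuotPos η p k m) wq →
        RepSpec η p u n (wq ++ dtDigits p m)) ∧
    (∀ (k : ℕ) (m : ℕ → List A) (a : ℕ → A), n ≤ -2 →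
      NegSpec η p (u (-1)) n k m a →
      (iterW η p [u (uQuotPos η p k m - (iterW η (k - p) [u (-1)]).length)])[sumLen η p m]?
          = some (u n) ∧
      ∀ wq : List ℕ,
        RepSpec η p u (uQuotPos η p k m - (iterW η (k - p) [u (-1)]).length) wq →
        RepSpec η p u n (wq ++ dtDigits p m)) :=
  rep_recurrence_general η p u hu n
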